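/- arXiv:1011.6070 — 3 statements merged into one kernel-verified Lean document; each statement's English description precedes it below -/
import Mathlib

section
/- Let H be a groupoid and for each subset U of H₀ let m_U be the H-set s⁻¹(U) with moment map t and action by composition. Then the map sending a morphism σ: U → V in Site(H) to the H-equivariant map f_σ: s⁻¹(U) → s⁻¹(V) given by f_σ(h) = h ∘ σ(s(h))⁻¹ is a bijection Hom_{Site(H)}(U, V) ≅ Hom_{H-Set}(m_U, m_V), i.e., the functor m: Site(H) → H-Set is fully faithful. -/
open CategoryTheory

universe u

variable {C : Type u} [Groupoid C]

/-- A morphism `U → V` in the small site `Site(H)` of a groupoid `H` (with object set `C`):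
a section `σ` of the source map over `U` whose targets all lie in `V`. -/
def SiteHom (U V : Set C) : Type u :=
  {σ : (x : C) → x ∈ U → Σ y : C, x ⟶ y // ∀ (x : C) (hx : x ∈ U), (σ x hx).1 ∈ V}

/-- The fiber over `y` of the `H`-set `m_U = s⁻¹(U)`: arrows `γ : x ⟶ y` with `x ∈ U`,
graded by the target map (the moment map). -/
def mU (U : Set C) (y : C) : Type u :=
  {p : Σ x : C, x ⟶ y // p.1 ∈ U}

/-- The `H`-action on `m_U` by composition of arrows. -/
def mUact (U : Set C) {y z : C} (h : y ⟶ z) : mU U y → mU U z :=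
  fun p => ⟨⟨p.1.1, p.1.2 ≫ h⟩, p.2⟩

/-- An `H`-equivariant map `m_U → m_V`: a family of maps on the fibers commuting with the
`H`-actions (and automatically over `H₀`, by the grading). -/
def EquivMap (U V : Set C) : Type u :=
  {f : (y : C) → mU U y → mU V y //
    ∀ (y z : C) (h : y ⟶ z) (p : mU U y), f z (mUact U h p) = mUact V h (f y p)}

/-- The map sending a morphism `σ : U → V` of `Site(H)` to the equivariant map
`f_σ : s⁻¹(U) → s⁻¹(V)` given by `f_σ(γ) = γ ∘ σ(s(γ))⁻¹`. -/
def toEquivMap (U V : Set C) (σ : SiteHom U V) : EquivMap U V :=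
  ⟨fun _ p => ⟨⟨(σ.1 p.1.1 p.2).1, Groupoid.inv (σ.1 p.1.1 p.2).2 ≫ p.1.2⟩, σ.2 p.1.1 p.2⟩,
   by
    intro y z h p
    apply Subtype.ext
    show (⟨_, Groupoid.inv (σ.1 p.1.1 p.2).2 ≫ (p.1.2 ≫ h)⟩ : Σ x : C, x ⟶ z)
      = ⟨_, (Groupoid.inv (σ.1 p.1.1 p.2).2 ≫ p.1.2) ≫ h⟩
    rw [Category.assoc]⟩

namespace mU

variable {U : Set C}

def unit (x : C) (hx : x ∈ U) : mU U x :=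
  ⟨⟨x, 𝟙 x⟩, hx⟩

theorem eq_mUact_unit {y : C} (p : mU U y) : p = mUact U p.1.2 (unit p.1.1 p.2) := by
  obtain ⟨⟨x, γ⟩, hx⟩ := p
  exact Subtype.ext (Sigma.ext rfl (heq_of_eq (Category.id_comp γ).symm))

end mU

namespace EquivMap

variable {U V : Set C}

/-- `m_U` is free on its generators, so an equivariant map is determined by their images. -/
theorem ext_of_unit {f g : EquivMap U V}
    (h : ∀ (x : C) (hx : x ∈ U), f.1 x (mU.unit x hx) = g.1 x (mU.unit x hx)) : f = g := by
  refine Subtype.ext (funext fun y => funext fun p => ?_)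
  rw [p.eq_mUact_unit, f.2, g.2, h]

end EquivMap

def ofEquivMap (U V : Set C) (f : EquivMap U V) : SiteHom U V :=
  ⟨fun x hx => ⟨(f.1 x (mU.unit x hx)).1.1, Groupoid.inv (f.1 x (mU.unit x hx)).1.2⟩,
   fun x hx => (f.1 x (mU.unit x hx)).2⟩

theorem ofEquivMap_toEquivMap (U V : Set C) (σ : SiteHom U V) :
    ofEquivMap U V (toEquivMap U V σ) = σ := by
  refine Subtype.ext (funext fun x => funext fun hx => ?_)
  change (⟨(σ.1 x hx).1, Groupoid.inv (Groupoid.inv (σ.1 x hx).2 ≫ 𝟙 x)⟩ : Σ y, x ⟶ y) = _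
  simp [Groupoid.inv_eq_inv]

theorem toEquivMap_ofEquivMap (U V : Set C) (f : EquivMap U V) :
    toEquivMap U V (ofEquivMap U V f) = f := by
  refine EquivMap.ext_of_unit fun x hx => Subtype.ext ?_
  change (⟨_, Groupoid.inv (Groupoid.inv (f.1 x (mU.unit x hx)).1.2) ≫ 𝟙 x⟩ : Σ a, a ⟶ x) = _
  simp [Groupoid.inv_eq_inv]

/-- The functor `m : Site(H) → H`-Set is fully faithful: for subsets `U, V ⊆ H₀`, the map
`σ ↦ f_σ`, `f_σ(γ) = γ ∘ σ(s(γ))⁻¹`, is a bijection from `Hom_{Site(H)}(U, V)` onto the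
set of `H`-equivariant maps `m_U → m_V`. -/
theorem site_to_equivariant_bijective (U V : Set C) :
    Function.Bijective (toEquivMap U V) :=
  Function.bijective_iff_has_inverse.mpr
    ⟨ofEquivMap U V, ofEquivMap_toEquivMap U V, toEquivMap_ofEquivMap U V⟩
end

section
/- Let H be a groupoid and K a groupoid object in the category of left H-sets, with underlying groupoid having objects K₀ (with moment map μ₀: K₀ → H₀) and arrows K₁ (with moment map μ₁), where the H-action commutes with all groupoid structure maps. Define H ⋉ K to have objects K₀ and arrows the pairs (h,k) with h ∈ H₁, k ∈ K₁, s(h) well-matched so that k: h·x → y; source s(h,k) = h⁻¹·s(k), target t(h,k) = t(k), composition (h',k')∘(h,k) = (h'h, k' ∘ (h'·k)), unit x ↦ (1_{μ₀(x)}, 1_x), and inverse (h,k)⁻¹ = (h⁻¹, h⁻¹·k⁻¹). Then H ⋉ K is a groupoid. -/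
open CategoryTheory

universe v u

theorem CategoryTheory.Grothendieck.isIso_of_isIso_base_of_isIso_fiber {C : Type*} [Category C]
    {F : C ⥤ Cat} {X Y : Grothendieck F} (f : X ⟶ Y) [IsIso f.base] [IsIso f.fiber] :
    IsIso f :=
  (isoMk (asIso f.base) (asIso f.fiber : _ ≅ Y.fiber)).isIso_hom

/-- Let `H` be a groupoid and `K` a groupoid object in `H`-sets, encoded (via the
equivalence between groupoid objects in presheaves and presheaves of groupoids) as a
functor `K : H ⥤ Grpd`.  The generalized action groupoid `H ⋉ K` is the Grothendieck
construction of `K`: its objects are pairs `(c, a)` with `a ∈ K(c)` (i.e. the elements of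
the `H`-set `K₀`), and its arrows `(c, a) → (c', b)` are pairs `(h, k)` with `h : c ⟶ c'`
and `k : h·a ⟶ b`, composed by `(h', k') ∘ (h, k) = (h'h, k' ∘ (h'·k))`.  The claim: with
the structure maps so defined, `H ⋉ K` is a groupoid, i.e. every morphism is invertible. -/
theorem generalized_action_groupoid_is_groupoid
    (H : Type u) [Groupoid H] (K : H ⥤ Grpd.{v, v})
    {X Y : Grothendieck (K ⋙ Grpd.forgetToCat)} (f : X ⟶ Y) :
    IsIso f := by
  -- instance search does not see through `Grpd.forgetToCat` to the fibre's groupoid structure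
  let _ : Groupoid ((K ⋙ Grpd.forgetToCat).obj Y.base) := Grpd.str' (K.obj Y.base)
  have : IsIso f.fiber := IsIso.of_groupoid f.fiber
  exact Grothendieck.isIso_of_isIso_base_of_isIso_fiber f
end

section
/- Let φ: G → H be a functor between groupoids and let P(φ) be the groupoid object in H-sets with objects {(h,x) ∈ H₁ × G₀ : s(h) = φ(x)} and arrows {(h,g) ∈ H₁ × G₁ : s(h) = φ(t(g))}, with the structure described. Then the generalized action groupoid H ⋉ P(φ) is equivalent (as a category) to G; moreover the equivalence can be realized by the functor ε: H ⋉ P(φ) → G sending an object (h, x) to x and an arrow ((h', g), (h, x)) to g, which admits a section χ: G → H ⋉ P(φ) given on objects by x ↦ (1_{φ(x)}, x), together with a natural isomorphism id ≅ χ ∘ ε. -/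
open CategoryTheory

universe u

variable {G H : Type u} [Groupoid.{u} G] [Groupoid.{u} H]

/-- The generalized action groupoid `H ⋉ P(φ)` of the groupoid object `P(φ)` in `H`-sets:
its objects are the pairs `(h, x)` with `h : φ(x) ⟶ c` for some `c` (i.e. `s(h) = φ(x)`),
and its arrows `(h, x) → (h', x')` are pairs of an arrow `f` of `H` acting on the moment
map component together with an arrow `(h', g)` of `P(φ)` from `f·(h, x)` to `(h', x')`;
this is exactly the comma category `φ ↓ H` of the functor `φ` over the identity of `H`. -/
abbrev ActionGroupoidP (φ : G ⥤ H) := Comma φ (𝟭 H)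

/-- The functor `ε : H ⋉ P(φ) → G` sending an object `(h, x)` to `x` and an arrow
`((h', g), (h, x))` to `g`; it is the first projection of the comma category. -/
abbrev epsilonP (φ : G ⥤ H) : ActionGroupoidP φ ⥤ G := Comma.fst φ (𝟭 H)

/-- The section `χ : G → H ⋉ P(φ)`, given on objects by `x ↦ (1_{φ(x)}, x)`. -/
def chiP (φ : G ⥤ H) : G ⥤ ActionGroupoidP φ where
  obj x := ⟨x, φ.obj x, 𝟙 (φ.obj x)⟩
  map g := { left := g, right := φ.map g, w := by simp }

/-!
Since `H` is a groupoid, every object `(h, x)` of `H ⋉ P(φ)` is isomorphic to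
`χ x = (1_{φ(x)}, x)` through the arrow `(h⁻¹, 1_x)`, and these isomorphisms are natural
because an arrow `(f, g) : (h, x) → (h', x')` satisfies `h' ∘ φ(g) = f ∘ h`. As `ε ∘ χ = id`
on the nose, `χ` is a quasi-inverse of `ε`.
-/

theorem chiP_comp_epsilonP (φ : G ⥤ H) : chiP φ ⋙ epsilonP φ = 𝟭 G := rfl

def isoChiPObjLeft (φ : G ⥤ H) (X : ActionGroupoidP φ) : X ≅ (chiP φ).obj X.left :=
  Comma.isoMk (Iso.refl _) ((Groupoid.isoEquivHom _ _).symm X.hom).symm (by simp [chiP])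

def unitIsoP (φ : G ⥤ H) : 𝟭 (ActionGroupoidP φ) ≅ epsilonP φ ⋙ chiP φ :=
  NatIso.ofComponents (isoChiPObjLeft φ) fun {X Y} f => by
    ext
    · simp [isoChiPObjLeft, chiP]
    · simp [isoChiPObjLeft, chiP, ← cancel_epi X.hom, ← reassoc_of% f.w]

def epsilonPEquiv (φ : G ⥤ H) : ActionGroupoidP φ ≌ G :=
  CategoryTheory.Equivalence.mk (epsilonP φ) (chiP φ) (unitIsoP φ)
    (eqToIso (chiP_comp_epsilonP φ))

/-- Let `φ : G → H` be a functor between groupoids and let `P(φ)` be the groupoid object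
in `H`-sets of the principal-bundle construction.  Then the generalized action groupoid
`H ⋉ P(φ)` is equivalent (as a category) to `G`; the equivalence is realized by the
functor `ε : H ⋉ P(φ) → G`, `(h, x) ↦ x`, which admits the section
`χ : G → H ⋉ P(φ)`, `x ↦ (1_{φ(x)}, x)` (so `ε ∘ χ = id`), together with a natural
isomorphism `id ≅ χ ∘ ε`. -/
theorem action_groupoid_P_equiv (φ : G ⥤ H) :
    chiP φ ⋙ epsilonP φ = 𝟭 G ∧
    Nonempty (𝟭 (ActionGroupoidP φ) ≅ epsilonP φ ⋙ chiP φ) ∧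
    (epsilonP φ).IsEquivalence :=
  ⟨chiP_comp_epsilonP φ, ⟨unitIsoP φ⟩, (epsilonPEquiv φ).isEquivalence_functor⟩
end
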